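/- Let G be the 3-SAT total-bondage construction: for each variable u_i a gadget H_i with vertices {u_i, ū_i, v_i, v_i'} and edges v_iu_i, u_iū_i, ū_iv_i, v_iv_i'; for each clause C_j a vertex c_j adjacent to its three literals; and a gadget H on {s_1,…,s_5} with edges s_1s_2, s_1s_4, s_2s_3, s_2s_4, s_4s_5, where s_1 and s_3 are joined to all c_j. Then γ_t(G) ≥ 2n + 2, and every minimum total dominating set D_t of G contains s_4 and contains v_i for every i = 1,…,n. -/
import Mathlib


/-- A literal over `n` variables: a variable index together with a polarity
(`true` = the positive literal `uᵢ`, `false` = the negated literal `ūᵢ`). -/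
abbrev Lit (n : ℕ) := Fin n × Bool

/-- Vertex type of the total-bondage construction: literal vertices `uᵢ, ūᵢ`,
gadget vertices `vᵢ` (second component `false`) and `vᵢ'` (second component
`true`), clause vertices `cⱼ`, and the vertices `s₁, …, s₅`. -/
abbrev TVert (n m : ℕ) := Lit n ⊕ ((Fin n × Bool) ⊕ (Fin m ⊕ Fin 5))

/-- The literal vertex `uᵢ` (if `b = true`) or `ūᵢ` (if `b = false`). -/
def tlit {n m : ℕ} (i : Fin n) (b : Bool) : TVert n m := Sum.inl (i, b)

/-- The gadget vertex `vᵢ`. -/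
def tvv {n m : ℕ} (i : Fin n) : TVert n m := Sum.inr (Sum.inl (i, false))

/-- The gadget vertex `vᵢ'`. -/
def tvv' {n m : ℕ} (i : Fin n) : TVert n m := Sum.inr (Sum.inl (i, true))

/-- The clause vertex `cⱼ`. -/
def tcv {n m : ℕ} (j : Fin m) : TVert n m := Sum.inr (Sum.inr (Sum.inl j))

/-- The vertex `s₍ₖ₊₁₎` for `k : Fin 5` (so `tsv 0 = s₁`, …, `tsv 4 = s₅`). -/
def tsv {n m : ℕ} (k : Fin 5) : TVert n m := Sum.inr (Sum.inr (Sum.inr k))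

/-- Base adjacency relation of the total-bondage construction (symmetrized by
`fromRel`): gadget edges `vᵢuᵢ, uᵢūᵢ, ūᵢvᵢ, vᵢvᵢ'`; clause edges joining `cⱼ`
to its three literals; gadget `H` edges `s₁s₂, s₁s₄, s₂s₃, s₂s₄, s₄s₅`; and the
edges joining `s₁` and `s₃` to every `cⱼ`. -/
def totRel {n m : ℕ} (C : Fin m → Fin 3 → Lit n) : TVert n m → TVert n m → Prop
  | Sum.inl (i, b), Sum.inl (i', b') => i = i' ∧ b ≠ b'
  | Sum.inl (i, _), Sum.inr (Sum.inl (i', c)) => i = i' ∧ c = false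
  | Sum.inr (Sum.inl (i, false)), Sum.inr (Sum.inl (i', true)) => i = i'
  | Sum.inl l, Sum.inr (Sum.inr (Sum.inl j)) => ∃ k, C j k = l
  | Sum.inr (Sum.inr (Sum.inr p)), Sum.inr (Sum.inr (Sum.inr q)) =>
      (p = 0 ∧ q = 1) ∨ (p = 0 ∧ q = 3) ∨ (p = 1 ∧ q = 2) ∨ (p = 1 ∧ q = 3) ∨
        (p = 3 ∧ q = 4)
  | Sum.inr (Sum.inr (Sum.inr p)), Sum.inr (Sum.inr (Sum.inl _)) => p = 0 ∨ p = 2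
  | _, _ => False

/-- The graph of the total-bondage construction associated with a 3-SAT instance `C`. -/
def totGraph {n m : ℕ} (C : Fin m → Fin 3 → Lit n) : SimpleGraph (TVert n m) :=
  SimpleGraph.fromRel (totRel C)

/-- `D` is a total dominating set of `G`: every vertex of `G` (including the
vertices of `D`) has a neighbor in `D`. -/
def IsTotalDomSet {V : Type*} (G : SimpleGraph V) (D : Finset V) : Prop :=
  ∀ v : V, ∃ u ∈ D, G.Adj u v

/-- The total domination number of `G`: the minimum cardinality of a total
dominating set. -/
noncomputable def totalDomNum {V : Type*} (G : SimpleGraph V) : ℕ :=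
  sInf {k | ∃ D : Finset V, IsTotalDomSet G D ∧ D.card = k}

lemma nbr_vv' {n m : ℕ} {C : Fin m → Fin 3 → Lit n} {i : Fin n} {w : TVert n m}
    (h : (totGraph C).Adj w (tvv' i)) : w = tvv i := by
  rw [totGraph, SimpleGraph.fromRel_adj] at h
  obtain ⟨hne, h | h⟩ := h <;>
  · rcases w with ⟨i', b⟩ | ⟨i', _ | _⟩ | j | p <;>
      simp_all [totRel, tvv', tvv]

lemma nbr_s5 {n m : ℕ} {C : Fin m → Fin 3 → Lit n} {w : TVert n m}
    (h : (totGraph C).Adj w (tsv 4)) : w = tsv 3 := by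
  rw [totGraph, SimpleGraph.fromRel_adj] at h
  obtain ⟨hne, h | h⟩ := h <;>
  · rcases w with ⟨i', b⟩ | ⟨i', _ | _⟩ | j | p <;>
      simp_all [totRel, tsv]

lemma nbr_vv {n m : ℕ} {C : Fin m → Fin 3 → Lit n} {i : Fin n} {w : TVert n m}
    (h : (totGraph C).Adj w (tvv i)) :
    w = tlit i true ∨ w = tlit i false ∨ w = tvv' i := by
  rw [totGraph, SimpleGraph.fromRel_adj] at h
  obtain ⟨hne, h | h⟩ := h <;>
  · rcases w with ⟨i', _ | _⟩ | ⟨i', _ | _⟩ | j | p <;>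
      simp_all [totRel, tvv', tvv, tlit]

lemma nbr_s4 {n m : ℕ} {C : Fin m → Fin 3 → Lit n} {w : TVert n m}
    (h : (totGraph C).Adj w (tsv 3)) :
    w = tsv 0 ∨ w = tsv 1 ∨ w = tsv 4 := by
  rw [totGraph, SimpleGraph.fromRel_adj] at h
  obtain ⟨hne, h | h⟩ := h <;>
  · rcases w with ⟨i', b⟩ | ⟨i', _ | _⟩ | j | p <;>
      simp_all [totRel, tsv] <;> tauto
lemma univ_tds {n m : ℕ} (C : Fin m → Fin 3 → Lit n) :
    IsTotalDomSet (totGraph C) Finset.univ := by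
  intro v
  rcases v with ⟨i, b⟩ | ⟨i, _ | _⟩ | j | p
  · exact ⟨tlit i (!b), Finset.mem_univ _, by
      rw [totGraph, SimpleGraph.fromRel_adj]
      refine ⟨by cases b <;> simp [tlit], Or.inl ?_⟩
      cases b <;> simp [totRel, tlit]⟩
  · exact ⟨tvv' i, Finset.mem_univ _, by
      rw [totGraph, SimpleGraph.fromRel_adj]
      exact ⟨by simp [tvv, tvv'], Or.inr (by simp [totRel, tvv, tvv'])⟩⟩
  · exact ⟨tvv i, Finset.mem_univ _, by
      rw [totGraph, SimpleGraph.fromRel_adj]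
      exact ⟨by simp [tvv, tvv'], Or.inl (by simp [totRel, tvv, tvv'])⟩⟩
  · exact ⟨tsv 0, Finset.mem_univ _, by
      rw [totGraph, SimpleGraph.fromRel_adj]
      exact ⟨by simp [tsv, tcv], Or.inl (by simp [totRel, tsv, tcv])⟩⟩
  · refine ⟨tsv (![1,0,1,0,3] p), Finset.mem_univ _, ?_⟩
    rw [totGraph, SimpleGraph.fromRel_adj]
    fin_cases p <;> exact ⟨by simp [tsv], by simp [totRel, tsv]⟩
lemma tds_facts {n m : ℕ} {C : Fin m → Fin 3 → Lit n} {D : Finset (TVert n m)}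
    (hD : IsTotalDomSet (totGraph C) D) :
    2 * n + 2 ≤ D.card ∧ tsv 3 ∈ D ∧ ∀ i : Fin n, tvv i ∈ D := by
  have hvv : ∀ i : Fin n, tvv i ∈ D := by
    intro i
    obtain ⟨u, hu, hadj⟩ := hD (tvv' i)
    rwa [nbr_vv' hadj] at hu
  have hs4 : tsv 3 ∈ D := by
    obtain ⟨u, hu, hadj⟩ := hD (tsv 4)
    rwa [nbr_s5 hadj] at hu
  refine ⟨?_, hs4, hvv⟩
  choose w hw hadj using fun i => hD (tvv i)
  obtain ⟨x, hx, hxadj⟩ := hD (tsv 3)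
  have hwi : ∀ i, w i = tlit i true ∨ w i = tlit i false ∨ w i = tvv' i :=
    fun i => nbr_vv (hadj i)
  have hx' : x = tsv 0 ∨ x = tsv 1 ∨ x = tsv 4 := nbr_s4 hxadj
  have hcard : (Finset.univ : Finset (Fin n ⊕ (Fin n ⊕ Fin 2))).card = 2 * n + 2 := by
    simp [Finset.card_univ]; ring
  rw [← hcard]
  apply Finset.card_le_card_of_injOn (Sum.elim tvv (Sum.elim w (fun t => if t = 0 then tsv 3 else x)))
  · rintro (i | i | t) -
    · exact hvv i
    · exact hw i
    · by_cases h : t = 0 <;> simp [h, hs4, hx]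
  rintro (i | i | t) - (i' | i' | t') - hab <;> simp only [Sum.elim_inl, Sum.elim_inr] at hab
  · simpa [tvv] using hab
  · exfalso; rcases hwi i' with h | h | h <;> simp_all [tvv, tlit, tvv']
  · exfalso; rcases hx' with h | h | h <;> fin_cases t' <;> simp_all [tvv, tsv]
  · exfalso; rcases hwi i with h | h | h <;> simp_all [tvv, tlit, tvv']
  · rcases hwi i with h | h | h <;> rcases hwi i' with h' | h' | h' <;>
      simp_all [tlit, tvv']
  · exfalso; rcases hwi i with h | h | h <;> rcases hx' with h2 | h2 | h2 <;>
      fin_cases t' <;> simp_all [tlit, tvv', tsv]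
  · exfalso; rcases hx' with h | h | h <;> fin_cases t <;> simp_all [tvv, tsv]
  · exfalso; rcases hwi i' with h | h | h <;> rcases hx' with h2 | h2 | h2 <;>
      fin_cases t <;> simp_all [tlit, tvv', tsv]
  · rcases hx' with h | h | h <;> fin_cases t <;> fin_cases t' <;> simp_all [tsv]

/-- In the total-bondage construction, `γ_t(G) ≥ 2n + 2`, and every minimum total
dominating set contains `s₄` and contains `vᵢ` for every `i`. -/
theorem totGraph_totalDomNum_ge {n m : ℕ} (C : Fin m → Fin 3 → Lit n) :
    2 * n + 2 ≤ totalDomNum (totGraph C) ∧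
      ∀ D : Finset (TVert n m), IsTotalDomSet (totGraph C) D →
        D.card = totalDomNum (totGraph C) →
          tsv 3 ∈ D ∧ ∀ i : Fin n, tvv i ∈ D := by
  constructor
  · refine le_csInf ⟨Finset.univ.card, Finset.univ, univ_tds C, rfl⟩ ?_
    rintro k ⟨D, hD, rfl⟩
    exact (tds_facts hD).1
  · intro D hD _
    exact (tds_facts hD).2
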